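/- Let f and g be candidate densities and p a probability density, with A = {x : f(x) > g(x)}. If the empirical frequency μ̂(A) = (1/n)Σ_i 1(X_i ∈ A) and f is selected when |∫_A f − μ̂(A)| < |∫_A g − μ̂(A)| (else g is selected), then the selected density p̂ satisfies ‖p − p̂‖_1 ≤ 3·min(‖p−f‖_1, ‖p−g‖_1) + 4·max_{B∈{A, Aᶜ'}} |∫_B p − μ̂(B)|, where Aᶜ' = {x : f(x) < g(x)}. -/

import Mathlib

open MeasureTheory
open scoped Classical

/-!
Write `a_q = ∫_A q` for `A = {f > g}`. Since `f`, `g`, `p` have the same mass, `‖f - g‖₁ = 2 (a_f - a_g)`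
and `|a_p - a_q| ≤ ‖p - q‖₁ / 2` for `q = f, g`. If `f` is selected, `|a_f - μ̂(A)| ≤ |a_g - μ̂(A)|`, so
`‖f - g‖₁ ≤ 2 |a_f - a_g| ≤ 4 |a_g - μ̂(A)| ≤ 2 ‖p - g‖₁ + 4 |a_p - μ̂(A)|`, and the triangle inequality
`‖p - f‖₁ ≤ ‖p - g‖₁ + ‖f - g‖₁` gives the bound; the case where `g` is selected is symmetric.
-/

section TotalVariation

variable {α : Type*} [MeasurableSpace α] {μ : Measure α}

theorem setIntegral_compl_eq_neg_of_integral_eq_zero {q : α → ℝ} (hq : Integrable q μ)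
    (hq0 : ∫ x, q x ∂μ = 0) {B : Set α} (hB : NullMeasurableSet B μ) :
    ∫ x in Bᶜ, q x ∂μ = -∫ x in B, q x ∂μ := by
  linarith [integral_add_compl₀ hB hq]

theorem abs_setIntegral_sub_le_half_integral_abs_sub {f g : α → ℝ} (hf : Integrable f μ)
    (hg : Integrable g μ) (hfg : ∫ x, f x ∂μ = ∫ x, g x ∂μ) {B : Set α}
    (hB : NullMeasurableSet B μ) :
    |(∫ x in B, f x ∂μ) - ∫ x in B, g x ∂μ| ≤ (∫ x, |f x - g x| ∂μ) / 2 := by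
  have hq : Integrable (fun x => f x - g x) μ := hf.sub hg
  have hq0 : ∫ x, (f x - g x) ∂μ = 0 := by rw [integral_sub hf hg, hfg, sub_self]
  have hcompl := setIntegral_compl_eq_neg_of_integral_eq_zero hq hq0 hB
  have hsplit := integral_add_compl₀ hB hq.abs
  rw [← integral_sub hf.restrict hg.restrict]
  have hB_le : |∫ x in B, (f x - g x) ∂μ| ≤ ∫ x in B, |f x - g x| ∂μ :=
    abs_integral_le_integral_abs
  have hBc_le : |∫ x in Bᶜ, (f x - g x) ∂μ| ≤ ∫ x in Bᶜ, |f x - g x| ∂μ :=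
    abs_integral_le_integral_abs
  rw [hcompl, abs_neg] at hBc_le
  linarith

theorem integral_abs_sub_eq_two_mul_setIntegral_sub {f g : α → ℝ} (hf : Integrable f μ)
    (hg : Integrable g μ) (hfg : ∫ x, f x ∂μ = ∫ x, g x ∂μ) :
    ∫ x, |f x - g x| ∂μ
      = 2 * ((∫ x in {x | g x < f x}, f x ∂μ) - ∫ x in {x | g x < f x}, g x ∂μ) := by
  set A := {x | g x < f x}
  have hA : NullMeasurableSet A μ := nullMeasurableSet_lt hg.aemeasurable hf.aemeasurable
  have hq : Integrable (fun x => f x - g x) μ := hf.sub hg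
  have hq0 : ∫ x, (f x - g x) ∂μ = 0 := by rw [integral_sub hf hg, hfg, sub_self]
  have hcompl := setIntegral_compl_eq_neg_of_integral_eq_zero hq hq0 hA
  have hsplit := integral_add_compl₀ hA hq.abs
  have hA_abs : ∫ x in A, |f x - g x| ∂μ = ∫ x in A, (f x - g x) ∂μ :=
    setIntegral_congr_fun₀ hA fun x hx => abs_of_pos (sub_pos.2 hx)
  have hAc_abs : ∫ x in Aᶜ, |f x - g x| ∂μ = -∫ x in Aᶜ, (f x - g x) ∂μ := by
    rw [← integral_neg]
    exact setIntegral_congr_fun₀ hA.compl fun x hx => abs_of_nonpos (sub_nonpos.2 (not_lt.1 hx))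
  rw [← integral_sub hf.restrict hg.restrict]
  linarith

theorem integral_abs_sub_le_add {f g h : α → ℝ} (hf : Integrable f μ) (hg : Integrable g μ)
    (hh : Integrable h μ) :
    ∫ x, |f x - h x| ∂μ ≤ (∫ x, |f x - g x| ∂μ) + ∫ x, |g x - h x| ∂μ := by
  calc ∫ x, |f x - h x| ∂μ ≤ ∫ x, (|f x - g x| + |g x - h x|) ∂μ :=
        integral_mono (hf.sub hh).abs ((hf.sub hg).abs.add (hg.sub hh).abs)
          fun x => abs_sub_le (f x) (g x) (h x)
    _ = _ := integral_add (hf.sub hg).abs (hg.sub hh).abs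

end TotalVariation

/-- Read `Δf = ‖p - f‖₁`, `Δg = ‖p - g‖₁`, `D = ‖f - g‖₁`, `aq = ∫_A q` and `e = μ̂(A)`. -/
theorem scheffe_selection_le {Δf Δg D af ag ap e : ℝ}
    (hD : D ≤ 2 * |af - ag|) (hf : |ap - af| ≤ Δf / 2) (hg : |ap - ag| ≤ Δg / 2)
    (htri_f : Δf ≤ Δg + D) (htri_g : Δg ≤ Δf + D) :
    (if |af - e| < |ag - e| then Δf else Δg) ≤ 3 * min Δf Δg + 4 * |ap - e| := by
  have hsep := abs_sub_le af e ag
  have hfe := abs_sub_le af ap e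
  have hge := abs_sub_le ag ap e
  rw [abs_sub_comm e ag] at hsep
  rw [abs_sub_comm af ap] at hfe
  rw [abs_sub_comm ag ap] at hge
  have := abs_nonneg (ap - e)
  have := abs_nonneg (ap - af)
  have := abs_nonneg (ap - ag)
  split_ifs with hsel <;> rcases min_cases Δf Δg with ⟨hmin, -⟩ | ⟨hmin, -⟩ <;>
    rw [hmin] <;> linarith

theorem scheffe_estimator_guarantee_general (d n : ℕ)
    (f g p : (Fin d → ℝ) → ℝ) (X : Fin n → (Fin d → ℝ))
    (hfi : Integrable f) (hgi : Integrable g) (hpi : Integrable p)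
    (hf1 : ∫ x, f x = 1) (hg1 : ∫ x, g x = 1) (hp1 : ∫ x, p x = 1) :
    let A : Set (Fin d → ℝ) := {x | g x < f x}
    let A' : Set (Fin d → ℝ) := {x | f x < g x}
    let emp : Set (Fin d → ℝ) → ℝ := fun B => (∑ i, if X i ∈ B then (1 : ℝ) else 0) / n
    let phat : (Fin d → ℝ) → ℝ :=
      if |(∫ x in A, f x) - emp A| < |(∫ x in A, g x) - emp A| then f else g
    ∫ x, |p x - phat x|
      ≤ 3 * min (∫ x, |p x - f x|) (∫ x, |p x - g x|)
        + 4 * max |(∫ x in A, p x) - emp A| |(∫ x in A', p x) - emp A'| := by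
  intro A A' emp phat
  have hA : NullMeasurableSet A := nullMeasurableSet_lt hgi.aemeasurable hfi.aemeasurable
  have hD : ∫ x, |f x - g x| ≤ 2 * |(∫ x in A, f x) - ∫ x in A, g x| := by
    rw [integral_abs_sub_eq_two_mul_setIntegral_sub hfi hgi (hf1.trans hg1.symm)]
    gcongr
    exact le_abs_self _
  have htri_f : ∫ x, |p x - f x| ≤ (∫ x, |p x - g x|) + ∫ x, |f x - g x| := by
    rw [show (fun x => |f x - g x|) = fun x => |g x - f x| from funext fun x => abs_sub_comm _ _]
    exact integral_abs_sub_le_add hpi hgi hfi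
  have hselect := scheffe_selection_le hD
    (abs_setIntegral_sub_le_half_integral_abs_sub hpi hfi (hp1.trans hf1.symm) hA)
    (abs_setIntegral_sub_le_half_integral_abs_sub hpi hgi (hp1.trans hg1.symm) hA)
    htri_f (integral_abs_sub_le_add hpi hfi hgi) (e := emp A)
  calc ∫ x, |p x - phat x|
        = if |(∫ x in A, f x) - emp A| < |(∫ x in A, g x) - emp A|
            then ∫ x, |p x - f x| else ∫ x, |p x - g x| :=
          apply_ite (fun q : (Fin d → ℝ) → ℝ => ∫ x, |p x - q x|) _ _ _
    _ ≤ _ := hselect.trans (by gcongr; exact le_max_left _ _)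

/-- Performance guarantee of the Scheffé estimator (Devroye–Lugosi, Theorem 6.1). -/
theorem scheffe_estimator_guarantee (d n : ℕ) (hn : 0 < n)
    (f g p : (Fin d → ℝ) → ℝ) (X : Fin n → (Fin d → ℝ))
    (hfm : Measurable f) (hgm : Measurable g) (hpm : Measurable p)
    (hf0 : ∀ x, 0 ≤ f x) (hg0 : ∀ x, 0 ≤ g x) (hp0 : ∀ x, 0 ≤ p x)
    (hfi : Integrable f) (hgi : Integrable g) (hpi : Integrable p)
    (hf1 : ∫ x, f x = 1) (hg1 : ∫ x, g x = 1) (hp1 : ∫ x, p x = 1) :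
    let A : Set (Fin d → ℝ) := {x | g x < f x}
    let A' : Set (Fin d → ℝ) := {x | f x < g x}
    let emp : Set (Fin d → ℝ) → ℝ := fun B => (∑ i, if X i ∈ B then (1 : ℝ) else 0) / n
    let phat : (Fin d → ℝ) → ℝ :=
      if |(∫ x in A, f x) - emp A| < |(∫ x in A, g x) - emp A| then f else g
    ∫ x, |p x - phat x|
      ≤ 3 * min (∫ x, |p x - f x|) (∫ x, |p x - g x|)
        + 4 * max |(∫ x in A, p x) - emp A| |(∫ x in A', p x) - emp A'| :=
  scheffe_estimator_guarantee_general d n f g p X hfi hgi hpi hf1 hg1 hp1
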